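/- If N is a closed PCF_dp program and the quasi-quote ⟨M⟩ is contextually congruent to N, then N evaluates to some quasi-quote ⟨M'⟩ with M contextually congruent to M'. -/

import Mathlib

/-!  A formalization of the meta-programming language PCF_dp (Davies–Pfenning style
quasi-quotation over call-by-value PCF), with small-step reduction, typing with a
modal context, contexts, contextual (pre)congruence, models, and a shallow
semantics for the program logic's formulae and judgements. -/

namespace PCFdp

/-- Types of PCF_dp: base types, functions, and code types `⟨α⟩`. -/
inductive Ty : Type
  | unit | bool | int
  | arrow (a b : Ty)
  | code (a : Ty)
deriving DecidableEq

/-- Terms of PCF_dp. `quote M` is the quasi-quote `⟨M⟩`, and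
`letq x M N` is `let ⟨x⟩ = M in N`. `fix g x α β M` is `μg.λx^α.M`. -/
inductive Tm : Type
  | var (x : ℕ)
  | cunit
  | cbool (b : Bool)
  | cint (n : ℤ)
  | lam (x : ℕ) (α : Ty) (M : Tm)
  | fix (g x : ℕ) (α β : Ty) (M : Tm)
  | app (M N : Tm)
  | add (M N : Tm)
  | ifte (M N N' : Tm)
  | quote (M : Tm)
  | letq (x : ℕ) (M N : Tm)
deriving DecidableEq

/-- Values: constants, abstractions, recursive abstractions, and all quasi-quotes. -/
inductive IsValue : Tm → Prop
  | cunit : IsValue .cunit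
  | cbool (b) : IsValue (.cbool b)
  | cint (n) : IsValue (.cint n)
  | lam (x α M) : IsValue (.lam x α M)
  | fix (g x α β M) : IsValue (.fix g x α β M)
  | quote (M) : IsValue (.quote M)

/-- Substitution `M[N/x]` (substituted terms are closed in all uses below). -/
def subst (x : ℕ) (N : Tm) : Tm → Tm
  | .var y => if y = x then N else .var y
  | .cunit => .cunit
  | .cbool b => .cbool b
  | .cint n => .cint n
  | .lam y α M => if y = x then .lam y α M else .lam y α (subst x N M)
  | .fix g y α β M => if g = x ∨ y = x then .fix g y α β M else .fix g y α β (subst x N M)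
  | .app M M' => .app (subst x N M) (subst x N M')
  | .add M M' => .add (subst x N M) (subst x N M')
  | .ifte M M₁ M₂ => .ifte (subst x N M) (subst x N M₁) (subst x N M₂)
  | .quote M => .quote (subst x N M)
  | .letq y M M' => .letq y (subst x N M) (if y = x then M' else subst x N M')

/-- Call-by-value small-step reduction, with the redexes of PCF plus
`let ⟨x⟩ = ⟨M⟩ in N → N[M/x]`, closed under evaluation contexts. -/
inductive Step : Tm → Tm → Prop
  | beta {x α M V} : IsValue V → Step (.app (.lam x α M) V) (subst x V M)
  | betaFix {g x α β M V} : IsValue V →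
      Step (.app (.fix g x α β M) V) (subst x V (subst g (.fix g x α β M) M))
  | iteT {N N'} : Step (.ifte (.cbool true) N N') N
  | iteF {N N'} : Step (.ifte (.cbool false) N N') N'
  | addC {m n} : Step (.add (.cint m) (.cint n)) (.cint (m + n))
  | letqQ {x M N} : Step (.letq x (.quote M) N) (subst x M N)
  | appL {M M' N} : Step M M' → Step (.app M N) (.app M' N)
  | appR {V N N'} : IsValue V → Step N N' → Step (.app V N) (.app V N')
  | addL {M M' N} : Step M M' → Step (.add M N) (.add M' N)
  | addR {V N N'} : IsValue V → Step N N' → Step (.add V N) (.add V N')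
  | ifteC {M M' N N'} : Step M M' → Step (.ifte M N N') (.ifte M' N N')
  | letqL {x M M' N} : Step M M' → Step (.letq x M N) (.letq x M' N)

/-- Many-step reduction `→*`. -/
def Steps : Tm → Tm → Prop := Relation.ReflTransGen Step

/-- `M ⇓ V`: evaluation to a value. -/
def Evals (M V : Tm) : Prop := Steps M V ∧ IsValue V

/-- `M ⇓`: convergence. -/
def Conv (M : Tm) : Prop := ∃ V, Evals M V

/-- `M ⇑`: divergence. -/
def Div (M : Tm) : Prop := ¬ Conv M

/-- Typing environments: partial maps from variables to types. -/
def Env : Type := ℕ → Option Ty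
def Env.empty : Env := fun _ => none
def Env.update (Γ : Env) (x : ℕ) (α : Ty) : Env := fun y => if y = x then some α else Γ y

/-- The typing judgement `Γ; Δ ⊢ M : α` with non-modal context `Γ` and modal
context `Δ`.  Free variables of quasi-quoted code must be modal; unquote binds
a modal variable. -/
inductive Types : Env → Env → Tm → Ty → Prop
  | varN {Γ Δ : Env} {x α} : Γ x = some α → Types Γ Δ (.var x) α
  | varM {Γ Δ : Env} {x α} : Δ x = some α → Types Γ Δ (.var x) α
  | cunit {Γ Δ} : Types Γ Δ .cunit .unit
  | cbool {Γ Δ b} : Types Γ Δ (.cbool b) .bool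
  | cint {Γ Δ n} : Types Γ Δ (.cint n) .int
  | lam {Γ Δ x α β M} : Types (Env.update Γ x α) Δ M β → Types Γ Δ (.lam x α M) (.arrow α β)
  | fix {Γ Δ g x α β M} :
      Types (Env.update (Env.update Γ g (.arrow α β)) x α) Δ M β →
      Types Γ Δ (.fix g x α β M) (.arrow α β)
  | app {Γ Δ M N α β} : Types Γ Δ M (.arrow α β) → Types Γ Δ N α → Types Γ Δ (.app M N) β
  | add {Γ Δ M N} : Types Γ Δ M .int → Types Γ Δ N .int → Types Γ Δ (.add M N) .int
  | ifte {Γ Δ M N N' α} : Types Γ Δ M .bool → Types Γ Δ N α → Types Γ Δ N' α →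
      Types Γ Δ (.ifte M N N') α
  | quote {Γ Δ M α} : Types Env.empty Δ M α → Types Γ Δ (.quote M) (.code α)
  | letq {Γ Δ x M N α β} : Types Γ Δ M (.code α) → Types Γ (Env.update Δ x α) N β →
      Types Γ Δ (.letq x M N) β

/-- `M` is a closed program of type `α`. -/
def Closed (M : Tm) (α : Ty) : Prop := Types Env.empty Env.empty M α

/-- Term contexts (terms with one hole). -/
inductive Ctx : Type
  | hole
  | lamC (x : ℕ) (α : Ty) (C : Ctx)
  | fixC (g x : ℕ) (α β : Ty) (C : Ctx)
  | appL (C : Ctx) (N : Tm)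
  | appR (M : Tm) (C : Ctx)
  | addL (C : Ctx) (N : Tm)
  | addR (M : Tm) (C : Ctx)
  | ifteC (C : Ctx) (N N' : Tm)
  | ifteL (M : Tm) (C : Ctx) (N' : Tm)
  | ifteR (M N : Tm) (C : Ctx)
  | quoteC (C : Ctx)
  | letqL (x : ℕ) (C : Ctx) (N : Tm)
  | letqR (x : ℕ) (M : Tm) (C : Ctx)

/-- Plugging a term into a context. -/
def Ctx.plug : Ctx → Tm → Tm
  | .hole, M => M
  | .lamC x α C, M => .lam x α (C.plug M)
  | .fixC g x α β C, M => .fix g x α β (C.plug M)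
  | .appL C N, M => .app (C.plug M) N
  | .appR L C, M => .app L (C.plug M)
  | .addL C N, M => .add (C.plug M) N
  | .addR L C, M => .add L (C.plug M)
  | .ifteC C N N', M => .ifte (C.plug M) N N'
  | .ifteL L C N', M => .ifte L (C.plug M) N'
  | .ifteR L N C, M => .ifte L N (C.plug M)
  | .quoteC C, M => .quote (C.plug M)
  | .letqL x C N, M => .letq x (C.plug M) N
  | .letqR x L C, M => .letq x L (C.plug M)

/-- Contextual precongruence `M ≲ N`: for every closing context `C` of type
`Unit` (for both terms), convergence of `C[M]` implies convergence of `C[N]`. -/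
def Prec (M N : Tm) : Prop :=
  ∀ C : Ctx, Closed (C.plug M) .unit → Closed (C.plug N) .unit →
    Conv (C.plug M) → Conv (C.plug N)

/-- Contextual congruence `M ≃ N`, i.e. `≲ ∩ ≲⁻¹`. -/
def Cong (M N : Tm) : Prop := Prec M N ∧ Prec N M

/-- Partial substitutions (used as the two components of a model). -/
def Sub : Type := ℕ → Option Tm
def Sub.remove (ρ : Sub) (x : ℕ) : Sub := fun y => if y = x then none else ρ y
def Sub.update (ρ : Sub) (x : ℕ) (M : Tm) : Sub := fun y => if y = x then some M else ρ y

/-- Simultaneous substitution of (closed) terms for free variables. -/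
def msubst (ρ : Sub) : Tm → Tm
  | .var x => (ρ x).getD (.var x)
  | .cunit => .cunit
  | .cbool b => .cbool b
  | .cint n => .cint n
  | .lam x α M => .lam x α (msubst (ρ.remove x) M)
  | .fix g x α β M => .fix g x α β (msubst ((ρ.remove g).remove x) M)
  | .app M N => .app (msubst ρ M) (msubst ρ N)
  | .add M N => .add (msubst ρ M) (msubst ρ N)
  | .ifte M N N' => .ifte (msubst ρ M) (msubst ρ N) (msubst ρ N')
  | .quote M => .quote (msubst ρ M)
  | .letq x M N => .letq x (msubst ρ M) (msubst (ρ.remove x) N)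

/-- A model of type `Γ; Δ`: `ξ` maps the non-modal variables to closed values of
the right types, `σ` maps the modal variables to closed (possibly diverging)
programs of the right types. -/
structure Model (Γ Δ : Env) : Type where
  ξ : Sub
  σ : Sub
  ξ_dom : ∀ x, (Γ x).isSome ↔ (ξ x).isSome
  ξ_typed : ∀ x α V, Γ x = some α → ξ x = some V → IsValue V ∧ Closed V α
  σ_dom : ∀ x, (Δ x).isSome ↔ (σ x).isSome
  σ_typed : ∀ x α M, Δ x = some α → σ x = some M → Closed M α

/-- The combined substitution `ξ ∪ σ` of a model. -/
def Model.sub {Γ Δ : Env} (η : Model Γ Δ) : Sub :=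
  fun x => match η.ξ x with | some V => some V | none => η.σ x

/-- The closure `Mη` of a term by a model. -/
def Model.close {Γ Δ : Env} (η : Model Γ Δ) (M : Tm) : Tm := msubst η.sub M

/-- Denotation of a variable in a model given as a pair of substitutions. -/
def lookup (ξ σ : Sub) (u : ℕ) : Option Tm :=
  match ξ u with | some V => some V | none => σ u

/-- Formulae of the logic, represented semantically by their satisfaction
predicate on models `(ξ, σ)`. -/
def Form : Type := Sub → Sub → Prop

/-- Semantics of the code-evaluation predicate `⟨u⟩↘m.A`: the denotation of `u`
evaluates to a quasi-quote `⟨M⟩`, `M ⇓ V`, and `A` holds with the modal anchor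
`m` bound to `V`. -/
def CodeEval (u m : ℕ) (A : Form) : Form := fun ξ σ =>
  ∃ U M V, lookup ξ σ u = some U ∧ Evals U (.quote M) ∧ Evals M V ∧ A ξ (σ.update m V)

/-- Validity of the total-correctness judgement `{A} M :_u {B}`
(anchor `u` non-modal). -/
def Valid (Γ Δ : Env) (A : Form) (M : Tm) (u : ℕ) (B : Form) : Prop :=
  ∀ η : Model Γ Δ, A η.ξ η.σ →
    ∃ V, Evals (η.close M) V ∧ B (η.ξ.update u V) η.σ

/-- Validity of a total-correctness judgement whose anchor is placed modally. -/
def ValidM (Γ Δ : Env) (A : Form) (M : Tm) (m : ℕ) (B : Form) : Prop :=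
  ∀ η : Model Γ Δ, A η.ξ η.σ →
    ∃ V, Evals (η.close M) V ∧ B η.ξ (η.σ.update m V)


/-!
The context `let ⟨0⟩ = [·] in ()` converges on `⟨M⟩`, hence on `N`, so `N ⇓ ⟨M'⟩`.
For `M ≃ M'`, a context `C` is extended to `C[let ⟨0⟩ = [·] in (λ1.1) 0]` (`unquoteCtx`).
Filled with `⟨M⟩` and with `N`, the two agree on convergence because `⟨M⟩ ≃ N`; and
since the filled hole is closed and reduces to `(λ1.1) M`, resp. `(λ1.1) M'`, they behave
like `C[M]` and `C[M']`. This last step is needed also when the hole of `C` lies under a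
binder, where nothing reduces; it goes through the simulation `Sim`.
-/

open Relation

theorem IsValue.not_step {V B : Tm} (hV : IsValue V) : ¬ Step V B := by
  intro s; cases hV <;> cases s

theorem IsValue.eq_of_steps {V B : Tm} (hV : IsValue V) (s : Steps V B) : B = V := by
  rcases s.cases_head with rfl | ⟨_, s, _⟩
  · rfl
  · exact (hV.not_step s).elim

theorem Step.det {A B B' : Tm} (s : Step A B) (s' : Step A B') : B = B' := by
  induction s generalizing B' <;> cases s' <;>
    first
    | rfl
    | grind [IsValue.not_step, IsValue]

def FV : Tm → Finset ℕ
  | .var x => {x}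
  | .cunit => ∅
  | .cbool _ => ∅
  | .cint _ => ∅
  | .lam x _ M => FV M \ {x}
  | .fix g x _ _ M => FV M \ {g, x}
  | .app M N => FV M ∪ FV N
  | .add M N => FV M ∪ FV N
  | .ifte M N N' => FV M ∪ FV N ∪ FV N'
  | .quote M => FV M
  | .letq x M N => FV M ∪ (FV N \ {x})

theorem subst_eq_self {x : ℕ} {W A : Tm} (h : x ∉ FV A) : subst x W A = A := by
  induction A <;> simp_all [FV, subst] <;> grind

theorem fv_subst_subset (x : ℕ) (W A : Tm) : FV (subst x W A) ⊆ FV A \ {x} ∪ FV W := by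
  induction A <;> simp only [subst] <;> (try split_ifs) <;>
    simp only [FV, Finset.subset_iff, Finset.mem_union, Finset.mem_sdiff, Finset.mem_insert,
      Finset.mem_singleton] at * <;> grind

theorem Step.fv_subset {A B : Tm} (s : Step A B) : FV B ⊆ FV A := by
  induction s with
  | beta | letqQ => exact (fv_subst_subset _ _ _).trans (by simp only [FV]; grind)
  | @betaFix g x α β M V =>
    have := fv_subst_subset g (.fix g x α β M) M
    refine (fv_subst_subset _ _ _).trans ?_
    simp only [FV, Finset.subset_iff, Finset.mem_union, Finset.mem_sdiff, Finset.mem_insert,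
      Finset.mem_singleton] at *
    grind
  | _ => simp only [FV]; grind

theorem Steps.fv_subset {A B : Tm} (s : Steps A B) : FV B ⊆ FV A := by
  induction s with
  | refl => rfl
  | tail _ s ih => exact s.fv_subset.trans ih

theorem Steps.fv_eq_empty {A B : Tm} (s : Steps A B) (h : FV A = ∅) : FV B = ∅ :=
  Finset.subset_empty.mp (h ▸ s.fv_subset)

theorem Steps.app_left {M M' N : Tm} (h : Steps M M') : Steps (.app M N) (.app M' N) :=
  h.lift (Tm.app · N) fun _ _ => Step.appL

theorem Steps.app_right {V N N' : Tm} (hV : IsValue V) (h : Steps N N') :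
    Steps (.app V N) (.app V N') :=
  h.lift (Tm.app V ·) fun _ _ => Step.appR hV

theorem Steps.add_left {M M' N : Tm} (h : Steps M M') : Steps (.add M N) (.add M' N) :=
  h.lift (Tm.add · N) fun _ _ => Step.addL

theorem Steps.add_right {V N N' : Tm} (hV : IsValue V) (h : Steps N N') :
    Steps (.add V N) (.add V N') :=
  h.lift (Tm.add V ·) fun _ _ => Step.addR hV

theorem Steps.ifte {M M' N N' : Tm} (h : Steps M M') : Steps (.ifte M N N') (.ifte M' N N') :=
  h.lift (Tm.ifte · N N') fun _ _ => Step.ifteC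

theorem Steps.letq {x : ℕ} {M M' N : Tm} (h : Steps M M') : Steps (.letq x M N) (.letq x M' N) :=
  h.lift (Tm.letq x · N) fun _ _ => Step.letqL

theorem Step.idApp {y : ℕ} {σ : Ty} {V : Tm} (hV : IsValue V) :
    Step (.app (.lam y σ (.var y)) V) V := by
  simpa [subst] using Step.beta (x := y) (α := σ) (M := .var y) hV

/-- `Sim A B`: `B` is obtained from `A` by running closed subterms forward and erasing
identity redexes `(λy.y) Q`.  It relates `C[P]` and `C[Q]` for every context `C`, also
when the hole is under a binder where neither side can reduce. -/
inductive Sim : Tm → Tm → Prop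
  | steps {A B : Tm} : FV A = ∅ → Steps A B → Sim A B
  | idApp {y : ℕ} {σ : Ty} {Q Q' : Tm} : Sim Q Q' → Sim (.app (.lam y σ (.var y)) Q) Q'
  | var (x : ℕ) : Sim (.var x) (.var x)
  | lam (x : ℕ) (α : Ty) {M M' : Tm} : Sim M M' → Sim (.lam x α M) (.lam x α M')
  | fix (g x : ℕ) (α β : Ty) {M M' : Tm} : Sim M M' → Sim (.fix g x α β M) (.fix g x α β M')
  | app {M M' N N' : Tm} : Sim M M' → Sim N N' → Sim (.app M N) (.app M' N')
  | add {M M' N N' : Tm} : Sim M M' → Sim N N' → Sim (.add M N) (.add M' N')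
  | ifte {M M' N N' P P' : Tm} : Sim M M' → Sim N N' → Sim P P' →
      Sim (.ifte M N P) (.ifte M' N' P')
  | quote {M M' : Tm} : Sim M M' → Sim (.quote M) (.quote M')
  | letq (x : ℕ) {M M' N N' : Tm} : Sim M M' → Sim N N' → Sim (.letq x M N) (.letq x M' N')

namespace Sim

theorem refl (A : Tm) : Sim A A := by
  induction A with
  | var x => exact .var x
  | cunit | cbool | cint => exact .steps (by simp [FV]) .refl
  | lam x α _ ih => exact .lam x α ih
  | fix g x α β _ ih => exact .fix g x α β ih
  | app _ _ ih₁ ih₂ => exact .app ih₁ ih₂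
  | add _ _ ih₁ ih₂ => exact .add ih₁ ih₂
  | ifte _ _ _ ih₁ ih₂ ih₃ => exact .ifte ih₁ ih₂ ih₃
  | quote _ ih => exact .quote ih
  | letq x _ _ ih₁ ih₂ => exact .letq x ih₁ ih₂

theorem plug {P Q : Tm} (r : Sim P Q) (C : Ctx) : Sim (C.plug P) (C.plug Q) := by
  induction C with
  | hole => exact r
  | lamC x α _ ih => exact .lam x α ih
  | fixC g x α β _ ih => exact .fix g x α β ih
  | appL _ N ih => exact .app ih (refl N)
  | appR L _ ih => exact .app (refl L) ih
  | addL _ N ih => exact .add ih (refl N)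
  | addR L _ ih => exact .add (refl L) ih
  | ifteC _ N N' ih => exact .ifte ih (refl N) (refl N')
  | ifteL L _ N' ih => exact .ifte (refl L) ih (refl N')
  | ifteR L N _ ih => exact .ifte (refl L) (refl N) ih
  | quoteC _ ih => exact .quote ih
  | letqL x _ N ih => exact .letq x ih (refl N)
  | letqR x L _ ih => exact .letq x (refl L) ih

theorem subst {x : ℕ} {V W A B : Tm} (hVW : Sim V W) (r : Sim A B) :
    Sim (PCFdp.subst x V A) (PCFdp.subst x W B) := by
  induction r with
  | steps hA hAB =>
    rw [subst_eq_self (by simp [hA]), subst_eq_self (by simp [hAB.fv_eq_empty hA])]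
    exact .steps hA hAB
  | @idApp y _ _ _ _ ih => by_cases h : y = x <;> simpa [PCFdp.subst, h] using idApp ih
  | var z => by_cases h : z = x <;> simp [PCFdp.subst, h, hVW, var]
  | lam z α _ ih => by_cases h : z = x <;> simp [PCFdp.subst, lam, *]
  | fix g z α β _ ih => by_cases h : g = x ∨ z = x <;> simp [PCFdp.subst, fix, *]
  | app _ _ ih₁ ih₂ => exact .app ih₁ ih₂
  | add _ _ ih₁ ih₂ => exact .add ih₁ ih₂
  | ifte _ _ _ ih₁ ih₂ ih₃ => exact .ifte ih₁ ih₂ ih₃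
  | quote _ ih => exact .quote ih
  | letq z _ _ ih₁ ih₂ => by_cases h : z = x <;> simp [PCFdp.subst, letq, *]

theorem isValue {A B : Tm} (r : Sim A B) (hA : IsValue A) : IsValue B := by
  cases r with
  | steps _ h => rwa [hA.eq_of_steps h]
  | lam | fix | quote => constructor
  | _ => cases hA

theorem exists_steps_isValue {A B : Tm} (r : Sim A B) (hB : IsValue B) :
    ∃ A', Steps A A' ∧ IsValue A' ∧ Sim A' B := by
  induction r with
  | steps _ h => exact ⟨_, h, hB, refl _⟩
  | idApp _ ih =>
    obtain ⟨V, hQV, hV, r⟩ := ih hB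
    exact ⟨V, ((hQV.app_right (.lam ..)).tail (.idApp hV)), hV, r⟩
  | lam x α h => exact ⟨_, .refl, .lam .., .lam x α h⟩
  | fix g x α β h => exact ⟨_, .refl, .fix .., .fix g x α β h⟩
  | quote h => exact ⟨_, .refl, .quote _, .quote h⟩
  | _ => cases hB

theorem lam_left {x : ℕ} {α : Ty} {M B : Tm} (r : Sim (.lam x α M) B) :
    ∃ M', B = .lam x α M' ∧ Sim M M' := by
  cases r with
  | steps _ h => exact ⟨M, (IsValue.lam ..).eq_of_steps h, refl M⟩
  | lam _ _ h => exact ⟨_, rfl, h⟩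

theorem fix_left {g x : ℕ} {α β : Ty} {M B : Tm} (r : Sim (.fix g x α β M) B) :
    ∃ M', B = .fix g x α β M' ∧ Sim M M' := by
  cases r with
  | steps _ h => exact ⟨M, (IsValue.fix ..).eq_of_steps h, refl M⟩
  | fix _ _ _ _ h => exact ⟨_, rfl, h⟩

theorem quote_left {M B : Tm} (r : Sim (.quote M) B) : ∃ M', B = .quote M' ∧ Sim M M' := by
  cases r with
  | steps _ h => exact ⟨M, (IsValue.quote _).eq_of_steps h, refl M⟩
  | quote h => exact ⟨_, rfl, h⟩

theorem cbool_left {b : Bool} {B : Tm} (r : Sim (.cbool b) B) : B = .cbool b := by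
  cases r with
  | steps _ h => exact (IsValue.cbool b).eq_of_steps h

theorem cint_left {n : ℤ} {B : Tm} (r : Sim (.cint n) B) : B = .cint n := by
  cases r with
  | steps _ h => exact (IsValue.cint n).eq_of_steps h

theorem lam_right {x : ℕ} {α : Ty} {A M' : Tm} (r : Sim A (.lam x α M')) :
    ∃ M, Steps A (.lam x α M) ∧ Sim M M' := by
  obtain ⟨V, hAV, hV, r⟩ := r.exists_steps_isValue (.lam ..)
  cases r with
  | steps _ h => exact ⟨M', hV.eq_of_steps h ▸ hAV, refl M'⟩
  | idApp => cases hV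
  | lam _ _ h => exact ⟨_, hAV, h⟩

theorem fix_right {g x : ℕ} {α β : Ty} {A M' : Tm} (r : Sim A (.fix g x α β M')) :
    ∃ M, Steps A (.fix g x α β M) ∧ Sim M M' := by
  obtain ⟨V, hAV, hV, r⟩ := r.exists_steps_isValue (.fix ..)
  cases r with
  | steps _ h => exact ⟨M', hV.eq_of_steps h ▸ hAV, refl M'⟩
  | idApp => cases hV
  | fix _ _ _ _ h => exact ⟨_, hAV, h⟩

theorem quote_right {A M' : Tm} (r : Sim A (.quote M')) : ∃ M, Steps A (.quote M) ∧ Sim M M' := by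
  obtain ⟨V, hAV, hV, r⟩ := r.exists_steps_isValue (.quote _)
  cases r with
  | steps _ h => exact ⟨M', hV.eq_of_steps h ▸ hAV, refl M'⟩
  | idApp => cases hV
  | quote h => exact ⟨_, hAV, h⟩

theorem cbool_right {b : Bool} {A : Tm} (r : Sim A (.cbool b)) : Steps A (.cbool b) := by
  obtain ⟨V, hAV, hV, r⟩ := r.exists_steps_isValue (.cbool b)
  cases r with
  | steps _ h => exact hV.eq_of_steps h ▸ hAV
  | idApp => cases hV

theorem cint_right {n : ℤ} {A : Tm} (r : Sim A (.cint n)) : Steps A (.cint n) := by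
  obtain ⟨V, hAV, hV, r⟩ := r.exists_steps_isValue (.cint n)
  cases r with
  | steps _ h => exact hV.eq_of_steps h ▸ hAV
  | idApp => cases hV

theorem step_left {A B A₁ : Tm} (r : Sim A B) (s : Step A A₁) :
    ∃ B₁, Steps B B₁ ∧ Sim A₁ B₁ := by
  induction r generalizing A₁ with
  | steps hA hAB =>
    rcases hAB.cases_head with rfl | ⟨A', s', hA'B⟩
    · exact ⟨A₁, .single s, refl A₁⟩
    · obtain rfl := s.det s'
      exact ⟨_, .refl, .steps (Finset.subset_empty.mp (hA ▸ s.fv_subset)) hA'B⟩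
  | idApp h ih =>
    cases s with
    | beta => exact ⟨_, .refl, by simpa [PCFdp.subst] using h⟩
    | appL s => cases s
    | appR _ s => obtain ⟨B₁, hB, h₁⟩ := ih s; exact ⟨B₁, hB, .idApp h₁⟩
  | var | lam | fix | quote => cases s
  | app h₁ h₂ ih₁ ih₂ =>
    cases s with
    | beta hV =>
      obtain ⟨M', rfl, hM⟩ := h₁.lam_left
      exact ⟨_, .single (.beta (h₂.isValue hV)), h₂.subst hM⟩
    | betaFix hV =>
      obtain ⟨M', rfl, hM⟩ := h₁.fix_left
      exact ⟨_, .single (.betaFix (h₂.isValue hV)), h₂.subst ((Sim.fix _ _ _ _ hM).subst hM)⟩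
    | appL s => obtain ⟨_, hB, h⟩ := ih₁ s; exact ⟨_, hB.app_left, .app h h₂⟩
    | appR hV s => obtain ⟨_, hB, h⟩ := ih₂ s; exact ⟨_, hB.app_right (h₁.isValue hV), .app h₁ h⟩
  | add h₁ h₂ ih₁ ih₂ =>
    cases s with
    | addC =>
      rw [h₁.cint_left, h₂.cint_left]
      exact ⟨_, .single .addC, refl _⟩
    | addL s => obtain ⟨_, hB, h⟩ := ih₁ s; exact ⟨_, hB.add_left, .add h h₂⟩
    | addR hV s => obtain ⟨_, hB, h⟩ := ih₂ s; exact ⟨_, hB.add_right (h₁.isValue hV), .add h₁ h⟩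
  | ifte h₁ h₂ h₃ ih₁ =>
    cases s with
    | iteT => exact ⟨_, by rw [h₁.cbool_left]; exact .single .iteT, h₂⟩
    | iteF => exact ⟨_, by rw [h₁.cbool_left]; exact .single .iteF, h₃⟩
    | ifteC s => obtain ⟨_, hB, h⟩ := ih₁ s; exact ⟨_, hB.ifte, .ifte h h₂ h₃⟩
  | letq x h₁ h₂ ih₁ =>
    cases s with
    | letqQ =>
      obtain ⟨M', rfl, hM⟩ := h₁.quote_left
      exact ⟨_, .single .letqQ, hM.subst h₂⟩
    | letqL s => obtain ⟨_, hB, h⟩ := ih₁ s; exact ⟨_, hB.letq, .letq x h h₂⟩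

theorem step_right {A B B₁ : Tm} (r : Sim A B) (s : Step B B₁) :
    ∃ A₁, Steps A A₁ ∧ Sim A₁ B₁ := by
  induction r generalizing B₁ with
  | steps _ hAB => exact ⟨B₁, hAB.tail s, refl B₁⟩
  | idApp _ ih => obtain ⟨_, hA, h⟩ := ih s; exact ⟨_, hA.app_right (.lam ..), .idApp h⟩
  | var | lam | fix | quote => cases s
  | app h₁ h₂ ih₁ ih₂ =>
    cases s with
    | beta hW =>
      obtain ⟨_, hL, hM⟩ := h₁.lam_right
      obtain ⟨_, hV, hVval, hV'⟩ := h₂.exists_steps_isValue hW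
      exact ⟨_, (hL.app_left.trans (hV.app_right (.lam ..))).tail (.beta hVval), hV'.subst hM⟩
    | betaFix hW =>
      obtain ⟨_, hL, hM⟩ := h₁.fix_right
      obtain ⟨_, hV, hVval, hV'⟩ := h₂.exists_steps_isValue hW
      exact ⟨_, (hL.app_left.trans (hV.app_right (.fix ..))).tail (.betaFix hVval),
        hV'.subst ((Sim.fix _ _ _ _ hM).subst hM)⟩
    | appL s => obtain ⟨_, hA, h⟩ := ih₁ s; exact ⟨_, hA.app_left, .app h h₂⟩
    | appR hW s =>
      obtain ⟨_, hV, hVval, hV'⟩ := h₁.exists_steps_isValue hW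
      obtain ⟨_, hA, h⟩ := ih₂ s
      exact ⟨_, hV.app_left.trans (hA.app_right hVval), .app hV' h⟩
  | add h₁ h₂ ih₁ ih₂ =>
    cases s with
    | addC =>
      exact ⟨_, (h₁.cint_right.add_left.trans (h₂.cint_right.add_right (.cint _))).tail .addC,
        refl _⟩
    | addL s => obtain ⟨_, hA, h⟩ := ih₁ s; exact ⟨_, hA.add_left, .add h h₂⟩
    | addR hW s =>
      obtain ⟨_, hV, hVval, hV'⟩ := h₁.exists_steps_isValue hW
      obtain ⟨_, hA, h⟩ := ih₂ s
      exact ⟨_, hV.add_left.trans (hA.add_right hVval), .add hV' h⟩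
  | ifte h₁ h₂ h₃ ih₁ =>
    cases s with
    | iteT => exact ⟨_, h₁.cbool_right.ifte.tail .iteT, h₂⟩
    | iteF => exact ⟨_, h₁.cbool_right.ifte.tail .iteF, h₃⟩
    | ifteC s => obtain ⟨_, hA, h⟩ := ih₁ s; exact ⟨_, hA.ifte, .ifte h h₂ h₃⟩
  | letq x h₁ h₂ ih₁ =>
    cases s with
    | letqQ =>
      obtain ⟨_, hM, hQ⟩ := h₁.quote_right
      exact ⟨_, hM.letq.tail .letqQ, hQ.subst h₂⟩
    | letqL s => obtain ⟨_, hA, h⟩ := ih₁ s; exact ⟨_, hA.letq, .letq x h h₂⟩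

theorem conv_of_conv_left {A B : Tm} (r : Sim A B) (h : Conv A) : Conv B := by
  obtain ⟨V, hAV, hV⟩ := h
  induction hAV using ReflTransGen.head_induction_on generalizing B with
  | refl => exact ⟨B, .refl, r.isValue hV⟩
  | head s _ ih =>
    obtain ⟨B₁, hBB₁, r₁⟩ := r.step_left s
    obtain ⟨W, hB₁W, hW⟩ := ih r₁
    exact ⟨W, hBB₁.trans hB₁W, hW⟩

theorem conv_of_conv_right {A B : Tm} (r : Sim A B) (h : Conv B) : Conv A := by
  obtain ⟨W, hBW, hW⟩ := h
  induction hBW using ReflTransGen.head_induction_on generalizing A with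
  | refl =>
    obtain ⟨V, hAV, hV, _⟩ := r.exists_steps_isValue hW
    exact ⟨V, hAV, hV⟩
  | head s _ ih =>
    obtain ⟨A₁, hAA₁, r₁⟩ := r.step_right s
    obtain ⟨V, hA₁V, hV⟩ := ih r₁
    exact ⟨V, hAA₁.trans hA₁V, hV⟩

theorem conv_iff {A B : Tm} (r : Sim A B) : Conv A ↔ Conv B :=
  ⟨r.conv_of_conv_left, r.conv_of_conv_right⟩

end Sim

def Env.Extends (Γ Γ' : Env) : Prop := ∀ x α, Γ x = some α → Γ' x = some α

theorem Env.Extends.update {Γ Γ' : Env} (h : Γ.Extends Γ') (x : ℕ) (α : Ty) :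
    (Γ.update x α).Extends (Γ'.update x α) := by
  intro y β
  simp only [Env.update]
  split_ifs
  exacts [id, h y β]

theorem Env.empty_extends (Γ : Env) : Env.empty.Extends Γ := by
  intro x α h
  cases h

theorem Types.mono {Γ Δ Γ' Δ' : Env} {A : Tm} {τ : Ty} (h : Types Γ Δ A τ)
    (hΓ : Γ.Extends Γ') (hΔ : Δ.Extends Δ') : Types Γ' Δ' A τ := by
  induction h generalizing Γ' Δ' with
  | varN hx => exact .varN (hΓ _ _ hx)
  | varM hx => exact .varM (hΔ _ _ hx)
  | cunit => exact .cunit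
  | cbool => exact .cbool
  | cint => exact .cint
  | lam _ ih => exact .lam (ih (hΓ.update _ _) hΔ)
  | fix _ ih => exact .fix (ih ((hΓ.update _ _).update _ _) hΔ)
  | app _ _ ih₁ ih₂ => exact .app (ih₁ hΓ hΔ) (ih₂ hΓ hΔ)
  | add _ _ ih₁ ih₂ => exact .add (ih₁ hΓ hΔ) (ih₂ hΓ hΔ)
  | ifte _ _ _ ih₁ ih₂ ih₃ => exact .ifte (ih₁ hΓ hΔ) (ih₂ hΓ hΔ) (ih₃ hΓ hΔ)
  | quote _ ih => exact .quote (ih (Env.empty_extends _) hΔ)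
  | letq _ _ ih₁ ih₂ => exact .letq (ih₁ hΓ hΔ) (ih₂ hΓ (hΔ.update _ _))

theorem Closed.types {A : Tm} {τ : Ty} (h : Closed A τ) (Γ Δ : Env) : Types Γ Δ A τ :=
  Types.mono h (Env.empty_extends Γ) (Env.empty_extends Δ)

theorem Types.isSome_of_mem_fv {Γ Δ : Env} {A : Tm} {τ : Ty} (h : Types Γ Δ A τ) :
    ∀ y ∈ FV A, (Γ y).isSome ∨ (Δ y).isSome := by
  induction h with
  | varN hx | varM hx => simp_all [FV]
  | cunit | cbool | cint => simp [FV]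
  | lam _ ih | fix _ ih | quote _ ih => simp only [FV, Env.update, Env.empty] at *; grind
  | app _ _ ih₁ ih₂ | add _ _ ih₁ ih₂ => simp only [FV] at *; grind
  | ifte _ _ _ ih₁ ih₂ ih₃ => simp only [FV] at *; grind
  | letq _ _ ih₁ ih₂ => simp only [FV, Env.update] at *; grind

theorem Closed.fv_eq_empty {A : Tm} {τ : Ty} (h : Closed A τ) : FV A = ∅ := by
  ext y
  simpa [Env.empty] using Types.isSome_of_mem_fv h y

def Ctx.comp : Ctx → Ctx → Ctx
  | .hole, D => D
  | .lamC x α C, D => .lamC x α (C.comp D)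
  | .fixC g x α β C, D => .fixC g x α β (C.comp D)
  | .appL C N, D => .appL (C.comp D) N
  | .appR L C, D => .appR L (C.comp D)
  | .addL C N, D => .addL (C.comp D) N
  | .addR L C, D => .addR L (C.comp D)
  | .ifteC C N N', D => .ifteC (C.comp D) N N'
  | .ifteL L C N', D => .ifteL L (C.comp D) N'
  | .ifteR L N C, D => .ifteR L N (C.comp D)
  | .quoteC C, D => .quoteC (C.comp D)
  | .letqL x C N, D => .letqL x (C.comp D) N
  | .letqR x L C, D => .letqR x L (C.comp D)

theorem Ctx.plug_comp (C D : Ctx) (P : Tm) : (C.comp D).plug P = C.plug (D.plug P) := by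
  induction C <;> simp [Ctx.comp, Ctx.plug, *]

theorem Types.exists_of_plug {P : Tm} (C : Ctx) {Γ Δ : Env} {τ : Ty}
    (h : Types Γ Δ (C.plug P) τ) :
    ∃ Γ₀ Δ₀ τ₀, Types Γ₀ Δ₀ P τ₀ ∧ ∀ Q, Types Γ₀ Δ₀ Q τ₀ → Types Γ Δ (C.plug Q) τ := by
  induction C generalizing Γ Δ τ
  case hole => exact ⟨Γ, Δ, τ, h, fun _ => id⟩
  all_goals
    rename_i ih
    cases h
    obtain ⟨Γ₀, Δ₀, τ₀, h₀, hC⟩ := ih ‹_›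
    exact ⟨Γ₀, Δ₀, τ₀, h₀, fun Q hQ => by constructor <;> first | exact hC Q hQ | assumption⟩

theorem Cong.conv_plug_iff {P Q : Tm} (h : Cong P Q) {C : Ctx} (hP : Closed (C.plug P) .unit)
    (hQ : Closed (C.plug Q) .unit) : Conv (C.plug P) ↔ Conv (C.plug Q) :=
  ⟨h.1 C hP hQ, h.2 C hQ hP⟩

theorem exists_steps_quote_of_conv_letq {x : ℕ} {A B : Tm} (h : Conv (.letq x A B)) :
    ∃ M, Steps A (.quote M) := by
  obtain ⟨V, hV, hVval⟩ := h
  generalize hT : Tm.letq x A B = T at hV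
  induction hV using ReflTransGen.head_induction_on generalizing A with
  | refl => subst hT; cases hVval
  | head s _ ih =>
    subst hT
    cases s with
    | letqQ => exact ⟨_, .refl⟩
    | letqL s => obtain ⟨M, hM⟩ := ih rfl; exact ⟨M, .head s hM⟩

/-- `(μf.λx^unit. f x) ()`, a closed program of type `τ`. -/
def diverge (τ : Ty) : Tm := .app (.fix 0 1 .unit τ (.app (.var 0) (.var 1))) .cunit

/-- `let ⟨0⟩ = [·] in let ⟨1⟩ = ⟨diverge τ⟩ in (λ1^α. 1) 0`.  A closed term has no unique
type here (a bound variable may also be typed through the modal context), so the hole of a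
context may have a type `τ ≠ α`.  With `1 : τ` modal, the identity `λ1^α. 1` is typed
`α → τ`, which turns code of type `α` into a program of type `τ`. -/
def unquoteCtx (α τ : Ty) : Ctx :=
  .letqL 0 .hole (.letq 1 (.quote (diverge τ)) (.app (.lam 1 α (.var 1)) (.var 0)))

theorem types_diverge {Γ Δ : Env} (τ : Ty) : Types Γ Δ (diverge τ) τ :=
  .app (α := .unit) (.fix (.app (α := .unit) (.varN rfl) (.varN rfl))) .cunit

theorem types_unquoteCtx {Γ Δ : Env} {P : Tm} {α τ : Ty} (h : Types Γ Δ P (.code α)) :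
    Types Γ Δ ((unquoteCtx α τ).plug P) τ :=
  .letq h (.letq (.quote (types_diverge τ)) (.app (.lam (.varM rfl)) (.varM rfl)))

theorem steps_unquoteCtx_quote {P : Tm} (hP : FV P = ∅) (α τ : Ty) :
    Steps ((unquoteCtx α τ).plug (.quote P)) (.app (.lam 1 α (.var 1)) P) := by
  let body : Tm := .app (.lam 1 α (.var 1)) (.var 0)
  have h₀ := Step.letqQ (x := 0) (M := P) (N := .letq 1 (.quote (diverge τ)) body)
  have h₁ := Step.letqQ (x := 1) (M := diverge τ) (N := .app (.lam 1 α (.var 1)) P)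
  simp only [body, subst, diverge, if_true, if_false, one_ne_zero] at h₀ h₁
  rw [subst_eq_self (by simp [hP])] at h₁
  exact .head h₀ (.single h₁)

theorem conv_plug_unquoteCtx_iff {N P : Tm} (hN : FV N = ∅) (hNP : Steps N (.quote P))
    (α τ : Ty) (C : Ctx) : Conv (C.plug ((unquoteCtx α τ).plug N)) ↔ Conv (C.plug P) := by
  have hP : FV P = ∅ := hNP.fv_eq_empty hN
  have hD : FV ((unquoteCtx α τ).plug N) = ∅ := by simp [unquoteCtx, Ctx.plug, FV, diverge, hN]
  have hDN : Steps ((unquoteCtx α τ).plug N) (.app (.lam 1 α (.var 1)) P) :=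
    hNP.letq.trans (steps_unquoteCtx_quote hP α τ)
  exact ((Sim.steps hD hDN).plug C).conv_iff.trans ((Sim.idApp (.refl P)).plug C).conv_iff

theorem conv_plug_iff_of_cong_quote {M N M' : Tm} {α : Ty} (hM : Closed (.quote M) (.code α))
    (hN : Closed N (.code α)) (h : Cong (.quote M) N) (hNM' : Steps N (.quote M')) {C : Ctx}
    (hC : Closed (C.plug M) .unit) : Conv (C.plug M) ↔ Conv (C.plug M') := by
  obtain ⟨Γ, Δ, τ, -, hC⟩ := Types.exists_of_plug C hC
  have typed : ∀ P, Closed P (.code α) → Closed ((C.comp (unquoteCtx α τ)).plug P) .unit :=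
    fun P hP => Ctx.plug_comp .. ▸ hC _ (types_unquoteCtx (hP.types Γ Δ))
  calc Conv (C.plug M)
      ↔ Conv (C.plug ((unquoteCtx α τ).plug (.quote M))) :=
        (conv_plug_unquoteCtx_iff hM.fv_eq_empty .refl α τ C).symm
    _ ↔ Conv (C.plug ((unquoteCtx α τ).plug N)) := by
        simpa only [Ctx.plug_comp] using h.conv_plug_iff (typed _ hM) (typed _ hN)
    _ ↔ Conv (C.plug M') := conv_plug_unquoteCtx_iff hN.fv_eq_empty hNM' α τ C

/-- if `N` is closed and `⟨M⟩ ≃ N`, then `N ⇓ ⟨M'⟩` with `M ≃ M'`. -/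
theorem cong_quote_evals_quote (M N : Tm) (α : Ty)
    (hq : Closed (Tm.quote M) (Ty.code α)) (hN : Closed N (Ty.code α))
    (h : Cong (Tm.quote M) N) :
    ∃ M', Evals N (Tm.quote M') ∧ Cong M M' := by
  have hE : Conv (.letq 0 (.quote M) .cunit) := ⟨.cunit, .single .letqQ, .cunit⟩
  obtain ⟨M', hNM'⟩ := exists_steps_quote_of_conv_letq
    (h.1 (.letqL 0 .hole .cunit) (.letq hq .cunit) (.letq hN .cunit) hE)
  have key {C : Ctx} (hC : Closed (C.plug M) .unit) := conv_plug_iff_of_cong_quote hq hN h hNM' hC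
  exact ⟨M', ⟨hNM', .quote M'⟩, fun _ hC _ => (key hC).1, fun _ _ hC => (key hC).2⟩

end PCFdp
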